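/- arXiv:2002.01292 — 2 statements merged into one kernel-verified Lean document; each statement's English description precedes it below -/
import Mathlib

section
/- Let f : ℝ → ℝ be monotone increasing and Lipschitz with constant m_c. Let I_m, L, ℓ > 0 with L = ℓ + 1/I_m, and let q̂, q : ℝ → ℝ be twice differentiable with I_m(q̂'' - q'') = -(f(q̂') - f(q')) - (I_m ℓ + 1)(q̂' - q') - ℓ(q̂ - q). Set s := (q̂' - q') + ℓ(q̂ - q) and ν := (I_m/2)(q̂' - q')² + (ℓ/2)(q̂ - q)² + (I_m/2)s². Then ν'(t) ≤ -(I_m L - m_c²/2)(q̂'(t) - q'(t))² - ½ s(t)² for all t. -/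
/-!
Write `e = q̂ - q` and `Δ = f(q̂') - f(q')`. Inserting the error dynamics into `ν'` and using
`I_m L = I_m ℓ + 1` gives the identity `ν' = -e'Δ - I_m L e'² - sΔ - s²`. Monotonicity of `f`
makes `e'Δ ≥ 0`, and Young's inequality with the Lipschitz bound `Δ² ≤ m_c² e'²` gives
`-sΔ ≤ s²/2 + m_c² e'²/2`.
-/

theorem LipschitzWith.sq_sub_le {f : ℝ → ℝ} {K : NNReal} (hf : LipschitzWith K f) (x y : ℝ) :
    (f x - f y) ^ 2 ≤ (K : ℝ) ^ 2 * (x - y) ^ 2 := by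
  have h : |f x - f y| ≤ K * |x - y| := by
    simpa only [Real.dist_eq] using hf.dist_le_mul x y
  calc (f x - f y) ^ 2 = |f x - f y| ^ 2 := (sq_abs _).symm
    _ ≤ (K * |x - y|) ^ 2 := pow_le_pow_left₀ (abs_nonneg _) h 2
    _ = (K : ℝ) ^ 2 * (x - y) ^ 2 := by rw [mul_pow, sq_abs]

theorem Real.coe_toNNReal_sq_le_sq (r : ℝ) : (r.toNNReal : ℝ) ^ 2 ≤ r ^ 2 := by
  rw [Real.coe_toNNReal']
  rcases le_total r 0 with hr | hr
  · rw [max_eq_right hr]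
    simpa using sq_nonneg r
  · rw [max_eq_left hr]

theorem hasDerivAt_observer_lyapunov {e e' : ℝ → ℝ} {d d' t : ℝ} (Im ℓ : ℝ)
    (he : HasDerivAt e d t) (he' : HasDerivAt e' d' t) :
    HasDerivAt (fun u => Im / 2 * e' u ^ 2 + ℓ / 2 * e u ^ 2 + Im / 2 * (e' u + ℓ * e u) ^ 2)
      (Im * e' t * d' + ℓ * e t * d + Im * (e' t + ℓ * e t) * (d' + ℓ * d)) t := by
  refine ((((he'.fun_pow 2).const_mul (Im / 2)).fun_add
    ((he.fun_pow 2).const_mul (ℓ / 2))).fun_add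
    (((he'.fun_add (he.const_mul ℓ)).fun_pow 2).const_mul (Im / 2))).congr_deriv ?_
  push_cast
  ring

/-- The rate estimate at a single instant: `v = e'`, `a = e''`, `v + ℓ e = s`. -/
theorem observer_lyapunov_rate_le {Im ℓ mc e v a Δ : ℝ}
    (hdyn : Im * a = -Δ - (Im * ℓ + 1) * v - ℓ * e) (hmono : 0 ≤ Δ * v)
    (hlip : Δ ^ 2 ≤ mc ^ 2 * v ^ 2) :
    Im * v * a + ℓ * e * v + Im * (v + ℓ * e) * (a + ℓ * v) ≤
      -(Im * ℓ + 1 - mc ^ 2 / 2) * v ^ 2 - 1 / 2 * (v + ℓ * e) ^ 2 := by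
  have hrate : Im * v * a + ℓ * e * v + Im * (v + ℓ * e) * (a + ℓ * v) =
      -(Δ * v) - (Im * ℓ + 1) * v ^ 2 - (v + ℓ * e) * Δ - (v + ℓ * e) ^ 2 := by
    linear_combination (2 * v + ℓ * e) * hdyn
  have hyoung := two_mul_le_add_sq (-(v + ℓ * e)) Δ
  linarith

theorem joint_observer_lyapunov_general
    (f : ℝ → ℝ) (hf : Monotone f) (mc : ℝ) (hfl : LipschitzWith (Real.toNNReal mc) f)
    (Im L ℓ : ℝ) (hIm : 0 < Im) (hLℓ : L = ℓ + 1 / Im)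
    (q qhat q' qhat' q'' qhat'' : ℝ → ℝ)
    (hq : ∀ t, HasDerivAt q (q' t) t)
    (hq' : ∀ t, HasDerivAt q' (q'' t) t)
    (hqhat : ∀ t, HasDerivAt qhat (qhat' t) t)
    (hqhat' : ∀ t, HasDerivAt qhat' (qhat'' t) t)
    (hdyn : ∀ t, Im * (qhat'' t - q'' t) =
      -(f (qhat' t) - f (q' t)) - (Im * ℓ + 1) * (qhat' t - q' t) - ℓ * (qhat t - q t))
    (s ν : ℝ → ℝ)
    (hs : s = fun t => (qhat' t - q' t) + ℓ * (qhat t - q t))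
    (hν : ν = fun t => Im / 2 * (qhat' t - q' t) ^ 2 + ℓ / 2 * (qhat t - q t) ^ 2
      + Im / 2 * (s t) ^ 2) :
    ∀ (t ν' : ℝ), HasDerivAt ν ν' t →
      ν' ≤ -(Im * L - mc ^ 2 / 2) * (qhat' t - q' t) ^ 2 - (1 / 2) * (s t) ^ 2 := by
  intro t ν' hν'
  subst hs hν
  have hImL : Im * L = Im * ℓ + 1 := by
    rw [hLℓ]
    field_simp
  rw [hν'.unique (hasDerivAt_observer_lyapunov Im ℓ ((hqhat t).sub (hq t))
    ((hqhat' t).sub (hq' t)))]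
  rw [hImL]
  refine observer_lyapunov_rate_le (hdyn t) ?_ ?_
  · exact (hf.monovary monotone_id).sub_mul_sub_nonneg (q' t) (qhat' t)
  · exact (hfl.sq_sub_le _ _).trans
      (mul_le_mul_of_nonneg_right (Real.coe_toNNReal_sq_le_sq mc) (sq_nonneg _))

/-- Joint observer Lyapunov derivative estimate (Lemma for the joint observer):
with error dynamics `I_m(q̂'' - q'') = -(f(q̂') - f(q')) - (I_mℓ + 1)(q̂' - q') - ℓ(q̂ - q)`,
`s = (q̂' - q') + ℓ(q̂ - q)` and
`ν = (I_m/2)(q̂' - q')² + (ℓ/2)(q̂ - q)² + (I_m/2)s²`, we have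
`ν' ≤ -(I_m L - m_c²/2)(q̂' - q')² - ½ s²`. -/
theorem joint_observer_lyapunov
    (f : ℝ → ℝ) (hf : Monotone f) (mc : ℝ) (hfl : LipschitzWith (Real.toNNReal mc) f)
    (Im L ℓ : ℝ) (hIm : 0 < Im) (hL : 0 < L) (hℓ : 0 < ℓ) (hLℓ : L = ℓ + 1 / Im)
    (q qhat q' qhat' q'' qhat'' : ℝ → ℝ)
    (hq : ∀ t, HasDerivAt q (q' t) t)
    (hq' : ∀ t, HasDerivAt q' (q'' t) t)
    (hqhat : ∀ t, HasDerivAt qhat (qhat' t) t)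
    (hqhat' : ∀ t, HasDerivAt qhat' (qhat'' t) t)
    (hdyn : ∀ t, Im * (qhat'' t - q'' t) =
      -(f (qhat' t) - f (q' t)) - (Im * ℓ + 1) * (qhat' t - q' t) - ℓ * (qhat t - q t))
    (s ν : ℝ → ℝ)
    (hs : s = fun t => (qhat' t - q' t) + ℓ * (qhat t - q t))
    (hν : ν = fun t => Im / 2 * (qhat' t - q' t) ^ 2 + ℓ / 2 * (qhat t - q t) ^ 2
      + Im / 2 * (s t) ^ 2) :
    ∀ (t ν' : ℝ), HasDerivAt ν ν' t →
      ν' ≤ -(Im * L - mc ^ 2 / 2) * (qhat' t - q' t) ^ 2 - (1 / 2) * (s t) ^ 2 :=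
  joint_observer_lyapunov_general f hf mc hfl Im L ℓ hIm hLℓ q qhat q' qhat' q'' qhat'' hq hq' hqhat
    hqhat' hdyn s ν hs hν
end

section
/- Under the assumptions of the previous joint-observer lemma, if additionally L > m_c²/(2 I_m), then ν is nonincreasing and (q̂' - q')² and s² are integrable bounded quantities; in particular ν(t) ≤ ν(0) for all t ≥ 0. -/
/-! Write `e = q̂ - q`, `v = q̂' - q'`, `s = v + ℓ e` and `d = f(q̂') - f(q')`. Substituting the error
dynamics, the cross terms in `e` cancel and `ν' = -d v - (I_m ℓ + 1) v² - s d - s²`. Monotonicity of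
`f` gives `d v ≥ 0`; completing the square gives `-s d - s² ≤ d²/4 ≤ m_c² v²/4` by the Lipschitz
bound, and this is absorbed by `(I_m ℓ + 1) v² = I_m L v²` because the gain condition says
`I_m L > m_c²/2`. -/

lemma LipschitzWith.sub_sq_le {f : ℝ → ℝ} {c : ℝ} (hf : LipschitzWith (Real.toNNReal c) f)
    (x y : ℝ) : (f x - f y) ^ 2 ≤ c ^ 2 * (x - y) ^ 2 := by
  have hdist : |f x - f y| ≤ Real.toNNReal c * |x - y| := by
    simpa only [Real.dist_eq] using hf.dist_le_mul x y
  have hc : (Real.toNNReal c : ℝ) ≤ |c| := by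
    rw [Real.coe_toNNReal']
    exact max_le (le_abs_self c) (abs_nonneg c)
  rw [← mul_pow, sq_le_sq, abs_mul]
  exact hdist.trans (mul_le_mul_of_nonneg_right hc (abs_nonneg _))

lemma dissipation_nonpos {v s d c K : ℝ} (hdv : 0 ≤ d * v) (hd : d ^ 2 ≤ c * v ^ 2)
    (hK : c / 4 ≤ K) : -(d * v) - K * v ^ 2 - s * d - s ^ 2 ≤ 0 := by
  nlinarith [sq_nonneg (s + d / 2), mul_le_mul_of_nonneg_right hK (sq_nonneg v)]

lemma hasDerivAt_observer_energy {e v : ℝ → ℝ} {a d Im ℓ t : ℝ} (he : HasDerivAt e (v t) t)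
    (hv : HasDerivAt v a t) (hdyn : Im * a = -d - (Im * ℓ + 1) * v t - ℓ * e t) :
    HasDerivAt (fun t => Im / 2 * v t ^ 2 + ℓ / 2 * e t ^ 2 + Im / 2 * (v t + ℓ * e t) ^ 2)
      (-(d * v t) - (Im * ℓ + 1) * v t ^ 2 - (v t + ℓ * e t) * d - (v t + ℓ * e t) ^ 2) t := by
  have hs : HasDerivAt (fun t => v t + ℓ * e t) (a + ℓ * v t) t := hv.add (he.const_mul ℓ)
  refine ((((hv.pow 2).const_mul (Im / 2)).add ((he.pow 2).const_mul (ℓ / 2))).add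
    ((hs.pow 2).const_mul (Im / 2))).congr_deriv ?_
  push_cast
  linear_combination (v t + (v t + ℓ * e t)) * hdyn

theorem joint_observer_nu_nonincreasing_general
    (f : ℝ → ℝ) (hf : Monotone f) (mc : ℝ) (hfl : LipschitzWith (Real.toNNReal mc) f)
    (Im L ℓ : ℝ) (hIm : 0 < Im) (hLℓ : L = ℓ + 1 / Im)
    (hgain : L > mc ^ 2 / (2 * Im))
    (q qhat q' qhat' q'' qhat'' : ℝ → ℝ)
    (hq : ∀ t, HasDerivAt q (q' t) t)
    (hq' : ∀ t, HasDerivAt q' (q'' t) t)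
    (hqhat : ∀ t, HasDerivAt qhat (qhat' t) t)
    (hqhat' : ∀ t, HasDerivAt qhat' (qhat'' t) t)
    (hdyn : ∀ t, Im * (qhat'' t - q'' t) =
      -(f (qhat' t) - f (q' t)) - (Im * ℓ + 1) * (qhat' t - q' t) - ℓ * (qhat t - q t))
    (s ν : ℝ → ℝ)
    (hs : s = fun t => (qhat' t - q' t) + ℓ * (qhat t - q t))
    (hν : ν = fun t => Im / 2 * (qhat' t - q' t) ^ 2 + ℓ / 2 * (qhat t - q t) ^ 2
      + Im / 2 * (s t) ^ 2) :
    AntitoneOn ν (Set.Ici (0 : ℝ)) ∧ ∀ t ≥ (0 : ℝ), ν t ≤ ν 0 := by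
  subst hLℓ hs hν
  have hK : mc ^ 2 / 4 ≤ Im * ℓ + 1 := by
    rw [gt_iff_lt, div_lt_iff₀ (by positivity)] at hgain
    have : (ℓ + 1 / Im) * (2 * Im) = 2 * (Im * ℓ + 1) := by field_simp
    nlinarith [sq_nonneg mc]
  have hanti : Antitone _ := antitone_of_hasDerivAt_nonpos
    (fun t => hasDerivAt_observer_energy ((hqhat t).sub (hq t)) ((hqhat' t).sub (hq' t)) (hdyn t))
    fun t => dissipation_nonpos ((hf.monovary monotone_id).sub_mul_sub_nonneg (q' t) (qhat' t))
      (hfl.sub_sq_le _ _) hK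
  exact ⟨hanti.antitoneOn _, fun t ht => hanti ht⟩

/-- Under the joint observer assumptions, if additionally `L > m_c²/(2 I_m)`,
then the Lyapunov function `ν` is nonincreasing on `[0, ∞)`; in particular
`ν(t) ≤ ν(0)` for all `t ≥ 0`. -/
theorem joint_observer_nu_nonincreasing
    (f : ℝ → ℝ) (hf : Monotone f) (mc : ℝ) (hfl : LipschitzWith (Real.toNNReal mc) f)
    (Im L ℓ : ℝ) (hIm : 0 < Im) (hℓ : 0 < ℓ) (hLℓ : L = ℓ + 1 / Im)
    (hgain : L > mc ^ 2 / (2 * Im))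
    (q qhat q' qhat' q'' qhat'' : ℝ → ℝ)
    (hq : ∀ t, HasDerivAt q (q' t) t)
    (hq' : ∀ t, HasDerivAt q' (q'' t) t)
    (hqhat : ∀ t, HasDerivAt qhat (qhat' t) t)
    (hqhat' : ∀ t, HasDerivAt qhat' (qhat'' t) t)
    (hdyn : ∀ t, Im * (qhat'' t - q'' t) =
      -(f (qhat' t) - f (q' t)) - (Im * ℓ + 1) * (qhat' t - q' t) - ℓ * (qhat t - q t))
    (s ν : ℝ → ℝ)
    (hs : s = fun t => (qhat' t - q' t) + ℓ * (qhat t - q t))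
    (hν : ν = fun t => Im / 2 * (qhat' t - q' t) ^ 2 + ℓ / 2 * (qhat t - q t) ^ 2
      + Im / 2 * (s t) ^ 2) :
    AntitoneOn ν (Set.Ici (0 : ℝ)) ∧ ∀ t ≥ (0 : ℝ), ν t ≤ ν 0 :=
  joint_observer_nu_nonincreasing_general f hf mc hfl Im L ℓ hIm hLℓ hgain q qhat q' qhat' q''
    qhat'' hq hq' hqhat hqhat' hdyn s ν hs hν
end
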